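/- Let g be a short sl₂-Lie superalgebra with operations ·, •, ⋆ determined by the Lie bracket. Then for all homogeneous a ∈ J and m, n ∈ M: a·(m⋆n) = ½((a•m)⋆n + (−1)^{|a||m|} m⋆(a•n)). -/

import Mathlib

/-- The Koszul sign `(-1)^{ij}` for parities `i j : ZMod 2`. -/
noncomputable def sg (i j : ZMod 2) : ℂ := (-1 : ℂ) ^ (i.val * j.val)

/-- A short `sl₂`-Lie superalgebra: a Z/2-graded complex Lie superalgebra `(G, B)`
together with operators `E F H` satisfying the `sl₂` relations, acting by even
derivations, such that `G` is spanned by `H`-eigenvectors with eigenvalues in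
`{-2,-1,0,1,2}` (which, over `ℂ`, is exactly the condition that `G` decomposes as an
`sl₂`-module into copies of the adjoint, the natural and the trivial representations,
i.e. `G ≅ sl₂⊗J ⊕ V⊗M ⊕ D`). -/
structure ShortSL2 {G : Type} [AddCommGroup G] [Module ℂ G]
    (gr : ZMod 2 → Submodule ℂ G)
    (B : G →ₗ[ℂ] G →ₗ[ℂ] G)
    (E F H : G →ₗ[ℂ] G) : Prop where
  bracket_grade : ∀ i j : ZMod 2, ∀ a ∈ gr i, ∀ b ∈ gr j, B a b ∈ gr (i + j)
  antisymm : ∀ i j : ZMod 2, ∀ a ∈ gr i, ∀ b ∈ gr j, B a b = -(sg i j • B b a)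
  jacobi : ∀ i j : ZMod 2, ∀ a ∈ gr i, ∀ b ∈ gr j, ∀ c : G,
      B a (B b c) = B (B a b) c + sg i j • B b (B a c)
  grade_spans : ∀ x : G, ∃ x0 x1 : G, x0 ∈ gr 0 ∧ x1 ∈ gr 1 ∧ x = x0 + x1
  rel_HE : H ∘ₗ E - E ∘ₗ H = 2 • E
  rel_HF : H ∘ₗ F - F ∘ₗ H = -(2 • F)
  rel_EF : E ∘ₗ F - F ∘ₗ E = H
  derE : ∀ x y : G, E (B x y) = B (E x) y + B x (E y)
  derF : ∀ x y : G, F (B x y) = B (F x) y + B x (F y)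
  derH : ∀ x y : G, H (B x y) = B (H x) y + B x (H y)
  evenE : ∀ i : ZMod 2, ∀ x ∈ gr i, E x ∈ gr i
  evenF : ∀ i : ZMod 2, ∀ x ∈ gr i, F x ∈ gr i
  evenH : ∀ i : ZMod 2, ∀ x ∈ gr i, H x ∈ gr i
  short : ∀ x : G, ∃ x2 x1 x0 y1 y2 : G,
      H x2 = (2 : ℂ) • x2 ∧ H x1 = x1 ∧ H x0 = 0 ∧
      H y1 = (-1 : ℂ) • y1 ∧ H y2 = (-2 : ℂ) • y2 ∧ x = x2 + x1 + x0 + y1 + y2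

/-!
`[a, m]` has `H`-weight `2 + 1 = 3`, which does not occur in a short `sl₂`-superalgebra, so
`a` supercommutes with every element of `M`. Applying the derivation `F` to `[m, n]` and then the
super Jacobi identity for `ad a` therefore leaves exactly the two terms of the right-hand side.
-/

namespace ShortSL2

variable {G : Type} [AddCommGroup G] [Module ℂ G] {gr : ZMod 2 → Submodule ℂ G}
  {B : G →ₗ[ℂ] G →ₗ[ℂ] G} {E F H : G →ₗ[ℂ] G}

theorem mem_iSup_eigenspace_ne (h : ShortSL2 gr B E F H) {μ : ℂ}
    (hμ : μ ∉ ({2, 1, 0, -1, -2} : Set ℂ)) (x : G) :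
    x ∈ ⨆ (ν : ℂ) (_ : ν ≠ μ), Module.End.eigenspace H ν := by
  have mem_of_eigen : ∀ ν ∈ ({2, 1, 0, -1, -2} : Set ℂ), ∀ y : G, H y = ν • y →
      y ∈ ⨆ (ν : ℂ) (_ : ν ≠ μ), Module.End.eigenspace H ν := fun ν hν y hy =>
    Submodule.mem_iSup_of_mem ν <| Submodule.mem_iSup_of_mem (ne_of_mem_of_not_mem hν hμ) <|
      Module.End.mem_eigenspace_iff.mpr hy
  obtain ⟨x2, x1, x0, y1, y2, h2, h1, h0, hm1, hm2, rfl⟩ := h.short x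
  have h1' : H x1 = (1 : ℂ) • x1 := by rw [h1, one_smul]
  have h0' : H x0 = (0 : ℂ) • x0 := by rw [h0, zero_smul]
  exact add_mem (add_mem (add_mem (add_mem (mem_of_eigen 2 (by simp) x2 h2)
    (mem_of_eigen 1 (by simp) x1 h1')) (mem_of_eigen 0 (by simp) x0 h0'))
    (mem_of_eigen (-1) (by simp) y1 hm1)) (mem_of_eigen (-2) (by simp) y2 hm2)

theorem eq_zero_of_apply_eq_smul (h : ShortSL2 gr B E F H) {μ : ℂ}
    (hμ : μ ∉ ({2, 1, 0, -1, -2} : Set ℂ)) {x : G} (hx : H x = μ • x) : x = 0 :=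
  Submodule.disjoint_def.mp (Module.End.eigenspaces_iSupIndep H μ) x
    (Module.End.mem_eigenspace_iff.mpr hx) (h.mem_iSup_eigenspace_ne hμ x)

theorem apply_bracket_eq_add_smul (h : ShortSL2 gr B E F H) {x y : G} {μ ν : ℂ}
    (hx : H x = μ • x) (hy : H y = ν • y) : H (B x y) = (μ + ν) • B x y := by
  rw [h.derH, hx, hy, map_smul, LinearMap.smul_apply, map_smul, add_smul]

theorem bracket_eq_zero_of_weight_two_of_weight_one (h : ShortSL2 gr B E F H) {a m : G}
    (ha : H a = (2 : ℂ) • a) (hm : H m = m) : B a m = 0 := by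
  refine h.eq_zero_of_apply_eq_smul (μ := 3) (by norm_num) ?_
  rw [h.apply_bracket_eq_add_smul ha (hm.trans (one_smul ℂ m).symm)]
  norm_num

end ShortSL2

/-- In a short `sl₂`-Lie superalgebra, with `2 a·b = [a, f b]`,
`a•m = [a, f m]`, `m⋆n = [m,n]`, one has
`a·(m⋆n) = ½((a•m)⋆n + (−1)^{|a||m|} m⋆(a•n))`. -/
theorem shortSL2_compat_star
    {G : Type} [AddCommGroup G] [Module ℂ G]
    (gr : ZMod 2 → Submodule ℂ G)
    (B : G →ₗ[ℂ] G →ₗ[ℂ] G) (E F H : G →ₗ[ℂ] G)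
    (h : ShortSL2 gr B E F H) :
    ∀ pa pm pn : ZMod 2, ∀ a ∈ gr pa, ∀ m ∈ gr pm, ∀ n ∈ gr pn,
      H a = (2 : ℂ) • a → H m = m → H n = n →
      (2 : ℂ)⁻¹ • B a (F (B m n))
        = (2 : ℂ)⁻¹ • (B (B a (F m)) n + sg pa pm • B m (B a (F n))) := by
  intro pa pm pn a ha m hm n _ hHa hHm hHn
  have ham : B a m = 0 := h.bracket_eq_zero_of_weight_two_of_weight_one hHa hHm
  have han : B a n = 0 := h.bracket_eq_zero_of_weight_two_of_weight_one hHa hHn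
  have jacobi_Fm_n : B a (B (F m) n) = B (B a (F m)) n := by
    rw [h.jacobi pa pm a ha (F m) (h.evenF pm m hm) n, han, map_zero, smul_zero, add_zero]
  have jacobi_m_Fn : B a (B m (F n)) = sg pa pm • B m (B a (F n)) := by
    rw [h.jacobi pa pm a ha m hm (F n), ham, map_zero, LinearMap.zero_apply, zero_add]
  rw [h.derF, map_add, jacobi_Fm_n, jacobi_m_Fn]
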